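/- arXiv:2306.15520 — 2 statements merged into one kernel-verified Lean document; each statement's English description precedes it below -/
import Mathlib

section
/- For any reduced word w in F_n, the symmetry relation s_w = p_w + p_{w^{-1}} lies in the kernel of the map σ_1: C(F_n) → Br(F_n) defined by σ_1(p_u) = p_u - p_{u^{-1}}; more generally, ker σ_1 is exactly the set of symmetric counting functions and is spanned by {s_w : w reduced, nonempty}. -/
open List Finset

/-- Number of occurrences of `w` as a contiguous subword of `v`. -/
def occ {α : Type*} [DecidableEq α] (w v : List α) : ℕ :=
  ((List.range (v.length + 1 - w.length)).filter (fun i => decide (w <+: v.drop i))).length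

/-- Elementary counting function, with the convention `p_ε(v) = |v|`. -/
def cnt {α : Type*} [DecidableEq α] (w v : List α) : ℚ :=
  if w = [] then v.length else occ w v

/-- The inverse of a letter of `S̄`: letters are pairs (generator, sign). -/
def invL {n : ℕ} (a : Fin n × Bool) : Fin n × Bool := (a.1, !a.2)

/-- The inverse of a (reduced) word. -/
def invW {n : ℕ} (w : List (Fin n × Bool)) : List (Fin n × Bool) := (w.map invL).reverse

def redB {n : ℕ} : List (Fin n × Bool) → Bool
  | a :: b :: t => decide (b ≠ invL a) && redB (b :: t)
  | _ => true

/-- A word over `S̄` is reduced if no letter is followed by its inverse. -/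
def Red {n : ℕ} (w : List (Fin n × Bool)) : Prop := redB w = true

instance {n : ℕ} : DecidablePred (Red (n := n)) := fun _ => instDecidableEqBool _ _

/-- Left extension relation `l_w = p_w - Σ_{s : sw reduced} p_{sw}`. -/
def lgrp {n : ℕ} (w v : List (Fin n × Bool)) : ℚ :=
  cnt w v - ∑ s ∈ Finset.univ.filter (fun s => Red (s :: w)), cnt (s :: w) v

/-- Right extension relation `r_w = p_w - Σ_{s : ws reduced} p_{ws}`. -/
def rgrp {n : ℕ} (w v : List (Fin n × Bool)) : ℚ :=
  cnt w v - ∑ s ∈ Finset.univ.filter (fun s => Red (w ++ [s])), cnt (w ++ [s]) v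

/-- The map `σ₁` sending a function on F_n to `f - f ∘ (·⁻¹)`; on counting functions
it sends `p_w` to the Brooks quasimorphism `φ_w = p_w - p_{w⁻¹}`. -/
def sig1 {n : ℕ} (f : List (Fin n × Bool) → ℚ) : List (Fin n × Bool) → ℚ :=
  fun v => f v - f (invW v)

/-!
Since `p_w ∘ inv = p_{w⁻¹}`, the map `σ₁` sends `Σ x_w p_w` to the counting function with
coefficients `x_w - x_{w⁻¹}`. Counting functions of distinct words are linearly independent even
as functions on reduced words: at a shortest word `w₀` of the support, `p_{w₀}` takes the value `1`
and every other `p_w` vanishes. Hence the kernel consists exactly of the symmetric coefficient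
families, and a symmetric `Σ x_w p_w` equals `½ Σ x_w s_w`.
-/

lemma List.IsPrefix.reverse_drop {α : Type*} {w v : List α} {i : ℕ} (h : w <+: v.drop i) :
    w.reverse <+: v.reverse.drop (v.length - w.length - i) := by
  obtain ⟨t, ht⟩ := h
  have hv : v = v.take i ++ (w ++ t) := by rw [ht, List.take_append_drop]
  have ht_len : t.length = v.length - w.length - i := by
    have := congrArg List.length hv
    simp only [List.length_append, List.length_take] at this
    omega
  have hrev : v.reverse = t.reverse ++ (w.reverse ++ (v.take i).reverse) := by
    conv_lhs => rw [hv]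
    simp
  rw [hrev, ← ht_len, ← List.length_reverse, List.drop_left]
  exact List.prefix_append _ _

section Occurrences

variable {α : Type*} [DecidableEq α]

lemma occ_eq_card (w v : List α) :
    occ w v = ((Finset.range (v.length + 1 - w.length)).filter (fun i => w <+: v.drop i)).card :=
  rfl

lemma occ_eq_zero_of_length_lt {w v : List α} (h : v.length < w.length) : occ w v = 0 := by
  simp [occ, show v.length + 1 - w.length = 0 by omega]

lemma occ_eq_zero_of_length_eq {w v : List α} (h : w.length = v.length) (hne : w ≠ v) :
    occ w v = 0 := by
  have : ¬ w <+: v := fun hp => hne (hp.eq_of_length h)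
  simp [occ, show v.length + 1 - w.length = 1 by omega, this]

lemma occ_self (w : List α) : occ w w = 1 := by
  simp [occ, List.range_succ]

lemma occ_map {β : Type*} [DecidableEq β] {f : α → β} (hf : Function.Injective f)
    (w v : List α) : occ (w.map f) (v.map f) = occ w v := by
  have key (i : ℕ) : w.map f <+: (v.map f).drop i ↔ w <+: v.drop i := by
    rw [← List.map_drop, List.prefix_map_iff]
    constructor
    · rintro ⟨l, hl, he⟩
      rwa [(List.map_injective_iff.mpr hf) he]
    · exact fun h => ⟨w, h, rfl⟩
  simp only [occ_eq_card, List.length_map, key]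

lemma occ_reverse (w v : List α) : occ w.reverse v.reverse = occ w v := by
  rcases lt_or_ge v.length w.length with h | h
  · rw [occ_eq_zero_of_length_lt h, occ_eq_zero_of_length_lt (by simpa using h)]
  rw [occ_eq_card, occ_eq_card, List.length_reverse, List.length_reverse]
  symm
  refine Finset.card_bij' (fun i _ => v.length - w.length - i)
    (fun i _ => v.length - w.length - i) ?_ ?_ ?_ ?_
  all_goals intro i hi; simp only [Finset.mem_filter, Finset.mem_range] at hi ⊢
  · exact ⟨by omega, hi.2.reverse_drop⟩
  · refine ⟨by omega, ?_⟩
    simpa [show v.length - w.length - (v.length - w.length - i) = i by omega]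
      using hi.2.reverse_drop
  · omega
  · omega

/-- The counting function `Σ x_w p_w`, where `p_w = occ w`. -/
noncomputable def countFn : (List α →₀ ℚ) →ₗ[ℚ] List α → ℚ :=
  Finsupp.linearCombination ℚ fun w v => (occ w v : ℚ)

lemma countFn_apply (x : List α →₀ ℚ) (v : List α) :
    countFn x v = ∑ w ∈ x.support, x w * occ w v := by
  simp [countFn, Finsupp.linearCombination_apply, Finsupp.sum, Finset.sum_apply]

lemma eq_zero_of_countFn_eq_zero_on {S : Set (List α)} {y : List α →₀ ℚ}
    (hy : ↑y.support ⊆ S) (h : ∀ v ∈ S, countFn y v = 0) : y = 0 := by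
  by_contra hne
  obtain ⟨w₀, hw₀, hmin⟩ :=
    y.support.exists_min_image List.length (Finsupp.support_nonempty_iff.mpr hne)
  have hval : countFn y w₀ = y w₀ := by
    rw [countFn_apply, Finset.sum_eq_single_of_mem w₀ hw₀, occ_self, Nat.cast_one, mul_one]
    intro u hu hne
    rcases (hmin u hu).eq_or_lt with he | hl
    · rw [occ_eq_zero_of_length_eq he.symm hne, Nat.cast_zero, mul_zero]
    · rw [occ_eq_zero_of_length_lt hl, Nat.cast_zero, mul_zero]
  exact Finsupp.mem_support_iff.mp hw₀ (hval ▸ h w₀ (hy hw₀))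

end Occurrences

section FreeGroup

variable {n : ℕ}

lemma invL_invL (a : Fin n × Bool) : invL (invL a) = a := by simp [invL]

lemma invL_injective : Function.Injective (invL (n := n)) :=
  Function.LeftInverse.injective invL_invL

lemma invW_invW (w : List (Fin n × Bool)) : invW (invW w) = w := by
  simp [invW, List.map_reverse, Function.comp_def, invL_invL]

lemma invW_injective : Function.Injective (invW (n := n)) :=
  Function.LeftInverse.injective invW_invW

lemma invW_eq_nil {w : List (Fin n × Bool)} : invW w = [] ↔ w = [] := by simp [invW]

lemma red_iff_isChain : ∀ w : List (Fin n × Bool), Red w ↔ w.IsChain (fun a b => b ≠ invL a)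
  | [] | [_] => by simp [Red, redB]
  | a :: b :: t => by
    rw [Red, redB, Bool.and_eq_true, decide_eq_true_iff, List.isChain_cons_cons]
    exact and_congr Iff.rfl (red_iff_isChain (b :: t))

lemma Red.invW {w : List (Fin n × Bool)} (h : Red w) : Red (invW w) := by
  rw [red_iff_isChain] at h ⊢
  rw [_root_.invW, List.isChain_reverse, List.isChain_map]
  exact h.imp fun a b hab he => hab (by rw [invL_injective he, invL_invL])

lemma occ_invW_invW (w v : List (Fin n × Bool)) : occ (invW w) (invW v) = occ w v := by
  rw [invW, invW, occ_reverse, occ_map invL_injective]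

lemma occ_invW (w v : List (Fin n × Bool)) : occ w (invW v) = occ (invW w) v := by
  rw [← occ_invW_invW, invW_invW]

lemma cnt_invW (w v : List (Fin n × Bool)) : cnt w (invW v) = cnt (invW w) v := by
  by_cases hw : w = []
  · simp [cnt, hw, invW]
  · simp [cnt, hw, invW_eq_nil, occ_invW]

def sig1Lin : (List (Fin n × Bool) → ℚ) →ₗ[ℚ] List (Fin n × Bool) → ℚ :=
  LinearMap.id - LinearMap.funLeft ℚ ℚ invW

lemma countFn_invW (x : List (Fin n × Bool) →₀ ℚ) (v : List (Fin n × Bool)) :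
    countFn x (invW v) = countFn (x.mapDomain invW) v := by
  simp only [countFn, Finsupp.linearCombination_mapDomain]
  simp [Finsupp.linearCombination_apply, Finsupp.sum, Finset.sum_apply, occ_invW]

lemma sig1_countFn (x : List (Fin n × Bool) →₀ ℚ) :
    sig1 (countFn x) = countFn (x - x.mapDomain invW) := by
  ext v
  rw [map_sub, Pi.sub_apply, ← countFn_invW]
  rfl

lemma mapDomain_invW_eq_self_iff {x : List (Fin n × Bool) →₀ ℚ} :
    x.mapDomain invW = x ↔ ∀ w, x w = x (invW w) := by
  refine ⟨fun h w => ?_, fun h => Finsupp.ext fun w => ?_⟩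
  · conv_lhs => rw [← h, ← invW_invW w]
    exact Finsupp.mapDomain_apply invW_injective x (invW w)
  · rw [← invW_invW w, Finsupp.mapDomain_apply invW_injective, invW_invW]
    exact (h w).symm

lemma sig1_countFn_eq_zero_iff {x : List (Fin n × Bool) →₀ ℚ} (hx : ∀ w ∈ x.support, Red w) :
    (∀ v, Red v → sig1 (countFn x) v = 0) ↔ ∀ w, x w = x (invW w) := by
  rw [← mapDomain_invW_eq_self_iff, eq_comm, ← sub_eq_zero, sig1_countFn]
  refine ⟨eq_zero_of_countFn_eq_zero_on (S := {v | Red v}) ?_, fun h v _ => by simp [h]⟩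
  intro w hw
  obtain hw | hw := Finset.mem_union.mp (Finsupp.support_sub hw)
  · exact hx w hw
  · obtain ⟨u, hu, rfl⟩ := Finset.mem_image.mp (Finsupp.mapDomain_support hw)
    exact (hx u hu).invW

lemma sig1_add_comp_invW (f : List (Fin n × Bool) → ℚ) : sig1 (fun u => f u + f (invW u)) = 0 := by
  ext v
  simp only [sig1, invW_invW, Pi.zero_apply]
  ring

/-- The symmetry relation `s_w = p_w + p_{w⁻¹}`. -/
def symmRel (w : List (Fin n × Bool)) : List (Fin n × Bool) → ℚ :=
  fun u => (occ w u : ℚ) + (occ (invW w) u : ℚ)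

lemma sig1_symmRel (w : List (Fin n × Bool)) : sig1 (symmRel w) = 0 := by
  have := sig1_add_comp_invW fun u => (occ w u : ℚ)
  simp only [occ_invW] at this
  exact this

def symmRelSpan : Submodule ℚ (List (Fin n × Bool) → ℚ) :=
  Submodule.span ℚ {g | ∃ w, Red w ∧ w ≠ [] ∧ g = symmRel w}

lemma sig1_eq_zero_of_mem_symmRelSpan {g : List (Fin n × Bool) → ℚ} (hg : g ∈ symmRelSpan) :
    sig1 g = 0 := by
  have : symmRelSpan ≤ LinearMap.ker (sig1Lin (n := n)) := by
    refine Submodule.span_le.mpr ?_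
    rintro _ ⟨w, -, -, rfl⟩
    exact sig1_symmRel w
  exact this hg

lemma countFn_add_countFn_mapDomain_invW (x : List (Fin n × Bool) →₀ ℚ) :
    countFn x + countFn (x.mapDomain invW) = ∑ w ∈ x.support, x w • symmRel w := by
  ext v
  rw [Pi.add_apply, ← countFn_invW, countFn_apply, countFn_apply, ← Finset.sum_add_distrib,
    Finset.sum_apply]
  simp only [occ_invW, symmRel, Pi.smul_apply, smul_eq_mul, mul_add]

lemma countFn_mem_symmRelSpan {x : List (Fin n × Bool) →₀ ℚ}
    (hx : ∀ w ∈ x.support, Red w ∧ w ≠ []) (hsym : ∀ w, x w = x (invW w)) :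
    countFn x ∈ symmRelSpan := by
  have htwo : (2 : ℚ) • countFn x ∈ symmRelSpan := by
    rw [two_smul]
    nth_rewrite 2 [← mapDomain_invW_eq_self_iff.mpr hsym]
    rw [countFn_add_countFn_mapDomain_invW]
    refine Submodule.sum_mem _ fun w hw => Submodule.smul_mem _ _ (Submodule.subset_span ?_)
    exact ⟨w, (hx w hw).1, (hx w hw).2, rfl⟩
  exact (Submodule.smul_mem_iff _ two_ne_zero).mp htwo

end FreeGroup

theorem stmt_9_general (n : ℕ) :
    (∀ w : List (Fin n × Bool), Red w →
      ∀ v : List (Fin n × Bool), Red v → sig1 (fun u => cnt w u + cnt (invW w) u) v = 0) ∧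
    (∀ x : List (Fin n × Bool) →₀ ℚ, (∀ w ∈ x.support, Red w ∧ w ≠ []) →
      (((∀ v : List (Fin n × Bool), Red v →
          sig1 (fun u => ∑ w ∈ x.support, x w * (occ w u : ℚ)) v = 0) ↔
        (∀ w : List (Fin n × Bool), x w = x (invW w))) ∧
       ((∀ v : List (Fin n × Bool), Red v →
          sig1 (fun u => ∑ w ∈ x.support, x w * (occ w u : ℚ)) v = 0) ↔
        (fun u => ∑ w ∈ x.support, x w * (occ w u : ℚ)) ∈
          Submodule.span ℚ {g : List (Fin n × Bool) → ℚ |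
            ∃ w, Red w ∧ w ≠ [] ∧ g = fun u => (occ w u : ℚ) + (occ (invW w) u : ℚ)}))) := by
  refine ⟨fun w _ v _ => ?_, fun x hx => ?_⟩
  · have hcnt : (fun u => cnt w u + cnt (invW w) u) = fun u => cnt w u + cnt w (invW u) :=
      funext fun u => by rw [cnt_invW]
    rw [hcnt, sig1_add_comp_invW, Pi.zero_apply]
  · have hf : (fun u => ∑ w ∈ x.support, x w * (occ w u : ℚ)) = countFn x :=
      funext fun u => (countFn_apply x u).symm
    have hker := sig1_countFn_eq_zero_iff fun w hw => (hx w hw).1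
    rw [hf]
    exact ⟨hker, fun hsym => countFn_mem_symmRelSpan hx (hker.mp hsym),
      fun hspan v _ => congrFun (sig1_eq_zero_of_mem_symmRelSpan hspan) v⟩

/-- Every symmetry relation s_w = p_w + p_{w⁻¹} lies in ker σ₁; more generally, a counting
function lies in ker σ₁ iff its coefficients are symmetric, iff it lies in the span of the
symmetry relations s_w for nonempty reduced w. -/
theorem stmt_9 (n : ℕ) (hn : 2 ≤ n) :
    (∀ w : List (Fin n × Bool), Red w →
      ∀ v : List (Fin n × Bool), Red v → sig1 (fun u => cnt w u + cnt (invW w) u) v = 0) ∧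
    (∀ x : List (Fin n × Bool) →₀ ℚ, (∀ w ∈ x.support, Red w ∧ w ≠ []) →
      (((∀ v : List (Fin n × Bool), Red v →
          sig1 (fun u => ∑ w ∈ x.support, x w * (occ w u : ℚ)) v = 0) ↔
        (∀ w : List (Fin n × Bool), x w = x (invW w))) ∧
       ((∀ v : List (Fin n × Bool), Red v →
          sig1 (fun u => ∑ w ∈ x.support, x w * (occ w u : ℚ)) v = 0) ↔
        (fun u => ∑ w ∈ x.support, x w * (occ w u : ℚ)) ∈
          Submodule.span ℚ {g : List (Fin n × Bool) → ℚ |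
            ∃ w, Red w ∧ w ≠ [] ∧ g = fun u => (occ w u : ℚ) + (occ (invW w) u : ℚ)}))) :=
  stmt_9_general n
end

section
/- Let W be the set of words w in the free monoid M_n (including the empty word) that neither begin nor end with the letter a_1. Then the classes of the counting functions p_w for w ∈ W span the quotient space Ĉ(M_n) = C(M_n)/K(M_n), where K(M_n) is the subspace of bounded counting functions. -/
open List Finset

section occlemmas
variable {α : Type*} [DecidableEq α]

lemma occ_eq_countP (w v : List α) :
    occ w v = (List.range (v.length + 1 - w.length)).countP (fun i => decide (w <+: v.drop i)) := by
  rw [occ, List.countP_eq_length_filter]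

lemma occ_nil_left (v : List α) : occ [] v = v.length + 1 := by
  simp [occ, List.nil_prefix]

lemma occ_nil_right (w : List α) (hw : w ≠ []) : occ w [] = 0 := by
  rcases w with _ | ⟨a, w⟩
  · simp at hw
  · simp [occ]

lemma occ_cons (w : List α) (b : α) (v : List α) :
    occ w (b :: v) = (if w <+: b :: v then 1 else 0) + occ w v := by
  rcases le_or_gt w.length (v.length + 1) with h | h
  · rw [occ_eq_countP, occ_eq_countP]
    have h1 : (b :: v).length + 1 - w.length = (v.length + 1 - w.length) + 1 := by
      simp only [List.length_cons]; omega
    rw [h1, List.range_succ_eq_map, List.countP_cons, List.countP_map]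
    have h2 : ((fun i => decide (w <+: (b :: v).drop i)) ∘ Nat.succ)
        = fun i => decide (w <+: v.drop i) := rfl
    rw [h2]
    simp only [List.drop_zero, decide_eq_true_eq]
    omega
  · have h0 : ¬ (w <+: b :: v) := by
      intro hp
      have := hp.length_le
      simp only [List.length_cons] at this
      omega
    have e1 : (b :: v).length + 1 - w.length = 0 := by simp only [List.length_cons]; omega
    have e2 : v.length + 1 - w.length = 0 := by omega
    rw [occ, occ, e1, e2]
    simp [h0]

lemma occ_snoc (w : List α) (v : List α) (b : α) :
    occ w (v ++ [b]) = occ w v + (if w <:+ v ++ [b] then 1 else 0) := by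
  induction v with
  | nil =>
    rw [List.nil_append, occ_cons]
    have hp : (w <+: [b]) ↔ (w = [b] ∨ w <+: ([] : List α)) := List.prefix_concat_iff (l₂ := [])
    have hiff : (w <+: [b]) ↔ (w <:+ [b]) := by
      rw [hp, List.suffix_cons_iff, List.prefix_nil, List.suffix_nil]
    simp only [hiff]
    omega
  | cons c v ih =>
    rw [List.cons_append, occ_cons, ih, occ_cons]
    have hiff1 : (w <+: c :: (v ++ [b])) ↔ (w = c :: (v ++ [b]) ∨ w <+: c :: v) := by
      rw [← List.cons_append, List.prefix_concat_iff, List.cons_append]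
    have hiff2 : (w <:+ c :: (v ++ [b])) ↔ (w = c :: (v ++ [b]) ∨ w <:+ v ++ [b]) :=
      List.suffix_cons_iff
    have hlen1 : w <+: c :: v → w ≠ c :: (v ++ [b]) := by
      intro hp he; have := hp.length_le; rw [he] at this; simp at this
    have hlen2 : w <:+ v ++ [b] → w ≠ c :: (v ++ [b]) := by
      intro hs he; have := hs.length_le; rw [he] at this; simp at this
    by_cases he : w = c :: (v ++ [b])
    · have h1 : ¬ w <+: c :: v := fun hp => hlen1 hp he
      have h2 : ¬ w <:+ v ++ [b] := fun hs => hlen2 hs he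
      have e1 : w <+: c :: (v ++ [b]) := by rw [he]
      have e2 : w <:+ c :: (v ++ [b]) := by rw [he]
      rw [if_pos e1, if_neg h1, if_neg h2, if_pos e2]
      omega
    · simp only [hiff1, hiff2, he, false_or]
      omega

end occlemmas
section sumlemmas
variable {α : Type*} [DecidableEq α] [Fintype α]

lemma occ_eq_sum_cons (w v : List α) :
    occ w v = (if w <+: v then 1 else 0) + ∑ a : α, occ (a :: w) v := by
  induction v with
  | nil =>
    rcases eq_or_ne w [] with rfl | hw
    · simp [occ_nil_left, occ_nil_right]
    · simp [occ_nil_right _ hw, occ_nil_right, hw]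
  | cons b v ih =>
    rw [occ_cons, ih]
    have hs : ∑ a : α, occ (a :: w) (b :: v)
        = (∑ a : α, occ (a :: w) v) + (if w <+: v then 1 else 0) := by
      simp only [occ_cons]
      rw [Finset.sum_add_distrib]
      have hsum : (∑ a : α, if a :: w <+: b :: v then 1 else 0)
          = if w <+: v then 1 else 0 := by
        have hpt : ∀ a : α, (if a :: w <+: b :: v then 1 else 0)
            = if a = b ∧ w <+: v then 1 else 0 := by
          intro a; simp [List.cons_prefix_cons]
        simp only [hpt]
        by_cases hp : w <+: v <;> simp [hp]
      rw [hsum, Nat.add_comm]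
    omega

lemma occ_eq_sum_snoc (w v : List α) :
    occ w v = (if w <:+ v then 1 else 0) + ∑ a : α, occ (w ++ [a]) v := by
  induction v using List.reverseRecOn with
  | nil =>
    rcases eq_or_ne w [] with rfl | hw
    · simp [occ_nil_left, occ_nil_right]
    · simp [occ_nil_right _ hw, occ_nil_right, hw]
  | append_singleton v b ih =>
    rw [occ_snoc, ih]
    have hs : ∑ a : α, occ (w ++ [a]) (v ++ [b])
        = (∑ a : α, occ (w ++ [a]) v) + (if w <:+ v then 1 else 0) := by
      simp only [occ_snoc]
      rw [Finset.sum_add_distrib]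
      have hsum : (∑ a : α, if w ++ [a] <:+ v ++ [b] then 1 else 0)
          = if w <:+ v then 1 else 0 := by
        have hpt : ∀ a : α, (if w ++ [a] <:+ v ++ [b] then 1 else 0)
            = if a = b ∧ w <:+ v then 1 else 0 := by
          intro a
          have hiff : (w ++ [a] <:+ v ++ [b]) ↔ (a = b ∧ w <:+ v) := by
            rw [← List.reverse_prefix]
            simp only [List.reverse_append, List.reverse_singleton, List.singleton_append,
              List.cons_prefix_cons, List.reverse_prefix]
          simp only [hiff]
        simp only [hpt]
        by_cases hsu : w <:+ v <;> simp [hsu]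
      rw [hsum, Nat.add_comm]
    omega

end sumlemmas
section leadlemmas
variable {α : Type*} [DecidableEq α]

def lead (z : α) (w : List α) : ℕ := (w.takeWhile (fun a => decide (a = z))).length

def trail (z : α) (w : List α) : ℕ := lead z w.reverse

lemma lead_cons (z b : α) (u : List α) :
    lead z (b :: u) = if b = z then lead z u + 1 else 0 := by
  by_cases h : b = z <;> simp [lead, List.takeWhile_cons, h]

lemma lead_le_append (z : α) (u l' : List α) : lead z u ≤ lead z (u ++ l') := by
  induction u with
  | nil => simp [lead]
  | cons c u ih =>
    rw [List.cons_append, lead_cons, lead_cons]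
    by_cases h : c = z <;> simp [h]
    omega

lemma lead_append_ne (z a : α) (h : a ≠ z) (u : List α) : lead z (u ++ [a]) = lead z u := by
  induction u with
  | nil => simp [lead, h]
  | cons c u ih =>
    rw [List.cons_append, lead_cons, lead_cons, ih]

lemma head_ne_of_lead_eq_zero {z : α} {w : List α} (h : lead z w = 0) :
    w.head? ≠ some z := by
  rcases w with _ | ⟨b, u⟩
  · simp
  · rw [lead_cons] at h
    by_cases hb : b = z
    · simp [hb] at h
    · simp [hb]

lemma getLast_ne_of_trail_eq_zero {z : α} {w : List α} (h : trail z w = 0) :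
    w.getLast? ≠ some z := by
  have := head_ne_of_lead_eq_zero (z := z) (w := w.reverse) h
  rwa [List.head?_reverse] at this

end leadlemmas
def Bdd (n : ℕ) : Submodule ℚ (List (Fin n) → ℚ) where
  carrier := {f | ∃ C : ℚ, ∀ v, |f v| ≤ C}
  add_mem' := by
    rintro f g ⟨C, hC⟩ ⟨D, hD⟩
    exact ⟨C + D, fun v => (abs_add_le _ _).trans (add_le_add (hC v) (hD v))⟩
  zero_mem' := ⟨0, fun v => by simp⟩
  smul_mem' := by
    rintro c f ⟨C, hC⟩
    refine ⟨|c| * C, fun v => ?_⟩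
    rw [Pi.smul_apply, smul_eq_mul, abs_mul]
    exact mul_le_mul_of_nonneg_left (hC v) (abs_nonneg c)

def GoodSet (n : ℕ) (z : Fin n) : Set (List (Fin n) → ℚ) :=
  {g | ∃ w : List (Fin n), w.head? ≠ some z ∧ w.getLast? ≠ some z ∧ g = cnt w}

lemma good_mem {n : ℕ} (z : Fin n) (w : List (Fin n))
    (h1 : w.head? ≠ some z) (h2 : w.getLast? ≠ some z) :
    (fun v => (occ w v : ℚ)) ∈ Submodule.span ℚ (GoodSet n z) ⊔ Bdd n := by
  rcases eq_or_ne w [] with rfl | hw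
  · have he : (fun v : List (Fin n) => (occ [] v : ℚ))
        = cnt ([] : List (Fin n)) + (fun _ => 1) := by
      funext v
      simp [cnt, occ_nil_left]
    rw [he]
    refine add_mem (Submodule.mem_sup_left (Submodule.subset_span ⟨[], by simp, by simp, rfl⟩))
      (Submodule.mem_sup_right ⟨1, fun v => by simp⟩)
  · have he : (fun v : List (Fin n) => (occ w v : ℚ)) = cnt w := by
      funext v; simp [cnt, hw]
    rw [he]
    exact Submodule.mem_sup_left (Submodule.subset_span ⟨w, h1, h2, rfl⟩)

lemma occ_mem (n : ℕ) (z : Fin n) (w : List (Fin n)) :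
    (fun v => (occ w v : ℚ)) ∈ Submodule.span ℚ (GoodSet n z) ⊔ Bdd n := by
  set T := Submodule.span ℚ (GoodSet n z) ⊔ Bdd n with hT
  suffices h : ∀ m : ℕ, ∀ w : List (Fin n), lead z w + trail z w < m →
      (fun v => (occ w v : ℚ)) ∈ T by
    exact h (lead z w + trail z w + 1) w (by omega)
  intro m
  induction m with
  | zero => intro w hw; omega
  | succ m ih =>
    intro w hw
    by_cases h1 : lead z w = 0
    · by_cases h2 : trail z w = 0
      · exact good_mem z w (head_ne_of_lead_eq_zero h1) (getLast_ne_of_trail_eq_zero h2)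
      · -- w ends with z : w = u ++ [z]
        have hwne : w ≠ [] := by
          intro he; rw [he] at h2; simp [trail, lead] at h2
        obtain ⟨u, rfl⟩ : ∃ u, w = u ++ [z] := by
          rcases List.eq_nil_or_concat w with he | ⟨u, b, hw2⟩
          · exact absurd he hwne
          rw [List.concat_eq_append] at hw2
          subst hw2
          refine ⟨u, ?_⟩
          · skip
            have hb : b = z := by
              by_contra hb
              rw [trail, List.reverse_append, List.reverse_singleton,
                List.singleton_append, lead_cons, if_neg hb] at h2
              exact h2 rfl
            rw [hb]
        have htw : trail z (u ++ [z]) = trail z u + 1 := by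
          rw [trail, List.reverse_append, List.reverse_singleton, List.singleton_append,
            lead_cons, if_pos rfl, trail]
        have hlw : lead z u ≤ lead z (u ++ [z]) := lead_le_append z u [z]
        -- identity : occ (u ++ [z]) = occ u - err - ∑_{a ≠ z} occ (u ++ [a])
        have hid : (fun v => (occ (u ++ [z]) v : ℚ))
            = (fun v => (occ u v : ℚ)) - (fun v => if u <:+ v then (1:ℚ) else 0)
              - (fun v => ∑ a ∈ Finset.univ.erase z, (occ (u ++ [a]) v : ℚ)) := by
          funext v
          have := occ_eq_sum_snoc u v (α := Fin n)
          have hsplit : ∑ a : Fin n, occ (u ++ [a]) v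
              = occ (u ++ [z]) v + ∑ a ∈ Finset.univ.erase z, occ (u ++ [a]) v :=
            (Finset.add_sum_erase Finset.univ _ (Finset.mem_univ z)).symm
          rw [hsplit] at this
          simp only [Pi.sub_apply]
          push_cast
          rw [this]
          by_cases hs : u <:+ v <;> simp [hs] <;> ring
        rw [hid]
        refine sub_mem (sub_mem ?_ ?_) ?_
        · exact ih u (by omega)
        · exact Submodule.mem_sup_right ⟨1, fun v => by by_cases hs : u <:+ v <;> simp [hs]⟩
        · have hrw : (fun v => ∑ a ∈ Finset.univ.erase z, (occ (u ++ [a]) v : ℚ))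
              = ∑ a ∈ Finset.univ.erase z, (fun v => (occ (u ++ [a]) v : ℚ)) := by
            funext v; rw [Finset.sum_apply]
          rw [hrw]
          refine Submodule.sum_mem _ fun a ha => ?_
          have haz : a ≠ z := Finset.ne_of_mem_erase ha
          refine ih (u ++ [a]) ?_
          have e1 : lead z (u ++ [a]) = lead z u := lead_append_ne z a haz u
          have e2 : trail z (u ++ [a]) = 0 := by
            rw [trail, List.reverse_append, List.reverse_singleton, List.singleton_append,
              lead_cons, if_neg haz]
          omega
    · -- w starts with z : w = z :: u
      obtain ⟨u, rfl⟩ : ∃ u, w = z :: u := by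
        rcases w with _ | ⟨b, u⟩
        · simp [lead] at h1
        · refine ⟨u, ?_⟩
          have hb : b = z := by
            by_contra hb
            rw [lead_cons, if_neg hb] at h1
            exact h1 rfl
          rw [hb]
      have hlw : lead z (z :: u) = lead z u + 1 := by rw [lead_cons, if_pos rfl]
      have htw : trail z u ≤ trail z (z :: u) := by
        rw [trail, trail, List.reverse_cons]
        exact lead_le_append z u.reverse [z]
      have hid : (fun v => (occ (z :: u) v : ℚ))
          = (fun v => (occ u v : ℚ)) - (fun v => if u <+: v then (1:ℚ) else 0)
            - (fun v => ∑ a ∈ Finset.univ.erase z, (occ (a :: u) v : ℚ)) := by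
        funext v
        have := occ_eq_sum_cons u v (α := Fin n)
        have hsplit : ∑ a : Fin n, occ (a :: u) v
            = occ (z :: u) v + ∑ a ∈ Finset.univ.erase z, occ (a :: u) v :=
          (Finset.add_sum_erase Finset.univ _ (Finset.mem_univ z)).symm
        rw [hsplit] at this
        simp only [Pi.sub_apply]
        push_cast
        rw [this]
        by_cases hs : u <+: v <;> simp [hs] <;> ring
      rw [hid]
      refine sub_mem (sub_mem ?_ ?_) ?_
      · exact ih u (by omega)
      · exact Submodule.mem_sup_right ⟨1, fun v => by by_cases hs : u <+: v <;> simp [hs]⟩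
      · have hrw : (fun v => ∑ a ∈ Finset.univ.erase z, (occ (a :: u) v : ℚ))
            = ∑ a ∈ Finset.univ.erase z, (fun v => (occ (a :: u) v : ℚ)) := by
          funext v; rw [Finset.sum_apply]
        rw [hrw]
        refine Submodule.sum_mem _ fun a ha => ?_
        have haz : a ≠ z := Finset.ne_of_mem_erase ha
        refine ih (a :: u) ?_
        have e1 : lead z (a :: u) = 0 := by rw [lead_cons, if_neg haz]
        have e2 : trail z (a :: u) = trail z u := by
          rw [trail, List.reverse_cons, trail, lead_append_ne z a haz]
        omega
lemma key (n : ℕ) (z : Fin n) :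
    ∀ f ∈ Submodule.span ℚ {g : List (Fin n) → ℚ | ∃ w : List (Fin n), g = cnt w},
      ∃ g ∈ Submodule.span ℚ {g : List (Fin n) → ℚ |
          ∃ w : List (Fin n), w.head? ≠ some z ∧ w.getLast? ≠ some z ∧ g = cnt w},
        ∃ C : ℚ, ∀ v : List (Fin n), |f v - g v| ≤ C := by
  intro f hf
  have hle : Submodule.span ℚ {g : List (Fin n) → ℚ | ∃ w : List (Fin n), g = cnt w}
      ≤ Submodule.span ℚ (GoodSet n z) ⊔ Bdd n := by
    rw [Submodule.span_le]
    rintro g ⟨w, rfl⟩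
    rcases eq_or_ne w [] with rfl | hw
    · have he : cnt ([] : List (Fin n))
          = (fun v => (occ ([] : List (Fin n)) v : ℚ)) - (fun _ => 1) := by
        funext v; simp [cnt, occ_nil_left]
      rw [he]
      exact sub_mem (occ_mem n z []) (Submodule.mem_sup_right ⟨1, fun v => by simp⟩)
    · have he : cnt w = (fun v => (occ w v : ℚ)) := by
        funext v; simp [cnt, hw]
      rw [he]
      exact occ_mem n z w
  have hf' := hle hf
  rw [Submodule.mem_sup] at hf'
  obtain ⟨g, hg, b, ⟨C, hC⟩, hfg⟩ := hf'
  refine ⟨g, hg, C, fun v => ?_⟩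
  have : f v - g v = b v := by
    have := congrFun hfg v
    simp only [Pi.add_apply] at this
    linarith
  rw [this]
  exact hC v

/-- The classes of p_w for words w neither beginning nor ending with a_1 span
Ĉ(M_n) = C(M_n)/K(M_n): every counting function is, up to a bounded function,
a combination of such p_w. -/
theorem stmt_10 (n : ℕ) (hn : 2 ≤ n) :
    ∀ f ∈ Submodule.span ℚ {g : List (Fin n) → ℚ | ∃ w : List (Fin n), g = cnt w},
      ∃ g ∈ Submodule.span ℚ {g : List (Fin n) → ℚ |
          ∃ w : List (Fin n), w.head? ≠ some (⟨0, by omega⟩ : Fin n) ∧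
            w.getLast? ≠ some (⟨0, by omega⟩ : Fin n) ∧ g = cnt w},
        ∃ C : ℚ, ∀ v : List (Fin n), |f v - g v| ≤ C :=
  key n ⟨0, by omega⟩
end
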